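/- Let N ≥ 2 and let V₁, …, Vₙ (n ≥ 2) be pairwise disjoint nonempty subsets of the cyclic group ℤ/N (the vertex set of a cycle of length N) such that for all i ≠ j, the set V_j is contained in a single 'cyclic interval' component of (ℤ/N) \ V_i (i.e., a maximal set of consecutive elements of ℤ/N avoiding V_i). Then there exists an index s such that the union ⋃_{j ≠ s} V_j is contained in a single cyclic interval component of (ℤ/N) \ V_s. -/

import Mathlib

/-- `S` is contained in a single cyclic-interval component of the complement of `V`
in the cycle `ℤ/N`: there is a run of cyclically consecutive elements avoiding `V`
which contains `S`. -/
def InOneComponent (N : ℕ) (V S : Set (ZMod N)) : Prop :=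
  ∃ (a : ZMod N) (k : ℕ),
    (∀ i ≤ k, (a + (i : ZMod N)) ∉ V) ∧
    S ⊆ {x : ZMod N | ∃ i ≤ k, x = a + (i : ZMod N)}

/-!
Among all pairs `i ≠ j` and arcs avoiding `V i` that contain `V j`, choose one of maximal length,
avoiding `V s`; maximality makes it a whole component of the complement of `V s`. If some `V j`,
`j ≠ s`, escaped it, the arc `R` avoiding `V s` that contains `V j` would be disjoint from the
chosen one, since an arc avoiding `V s` that meets a component lies inside it. The complementary
arc of `R` avoids `V j` and contains `V s`, so it is no longer than the chosen arc; but the chosen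
arc, `R` and a point of `V s` are disjoint, and counting points in `ℤ/N` gives a contradiction.
-/

theorem Nat.forall_le_of_iff_succ {P : ℕ → Prop} {m i : ℕ}
    (hstep : ∀ l < m, (P l ↔ P (l + 1))) (hi : i ≤ m) (hPi : P i) : ∀ l ≤ m, P l := by
  have hP0 : ∀ l ≤ m, (P l ↔ P 0) := by
    intro l hl
    induction l with
    | zero => rfl
    | succ l ih => exact (hstep l (by omega)).symm.trans (ih (by omega))
  exact fun l hl => (hP0 l hl).2 ((hP0 i hi).1 hPi)

namespace ZMod

variable {N : ℕ}

/-- The cyclic interval `{a, a + 1, …, a + k}`; it has `k + 1` points when `k < N`. -/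
def arc (a : ZMod N) (k : ℕ) : Finset (ZMod N) :=
  (Finset.range (k + 1)).image fun i : ℕ => a + i

section Arc

variable {a x : ZMod N} {k l : ℕ}

theorem mem_arc : x ∈ arc a k ↔ ∃ i ≤ k, x = a + i := by
  simp only [arc, Finset.mem_image, Finset.mem_range, Nat.lt_succ_iff]
  exact ⟨fun ⟨i, hi, hx⟩ => ⟨i, hi, hx.symm⟩, fun ⟨i, hi, hx⟩ => ⟨i, hi, hx.symm⟩⟩

theorem forall_mem_arc {p : ZMod N → Prop} : (∀ x ∈ arc a k, p x) ↔ ∀ i ≤ k, p (a + i) := by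
  simp [arc]

theorem coe_arc : (arc a k : Set (ZMod N)) = {x | ∃ i ≤ k, x = a + i} :=
  Set.ext fun _ => mem_arc

theorem arc_mono (h : k ≤ l) : arc a k ⊆ arc a l :=
  Finset.image_subset_image (Finset.range_subset_range.2 (by omega))

theorem arc_succ : arc a (k + 1) = insert (a + ((k + 1 : ℕ) : ZMod N)) (arc a k) := by
  rw [arc, Finset.range_add_one, Finset.image_insert, ← arc]

theorem arc_sub_one_succ : arc (a - 1) (k + 1) = insert (a - 1) (arc a k) := by
  ext x
  simp only [Finset.mem_insert, mem_arc]
  constructor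
  · rintro ⟨_ | i, hi, rfl⟩
    · simp
    · exact Or.inr ⟨i, by omega, by push_cast; ring⟩
  · rintro (rfl | ⟨i, hi, rfl⟩)
    · exact ⟨0, by omega, by simp⟩
    · exact ⟨i + 1, by omega, by push_cast; ring⟩

theorem arc_add : arc a (k + 1 + l) = arc a k ∪ arc (a + ((k + 1 : ℕ) : ZMod N)) l := by
  ext x
  simp only [Finset.mem_union, mem_arc]
  constructor
  · rintro ⟨i, hi, rfl⟩
    by_cases hik : i ≤ k
    · exact Or.inl ⟨i, hik, rfl⟩
    · refine Or.inr ⟨i - (k + 1), by omega, ?_⟩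
      rw [add_assoc, ← Nat.cast_add, Nat.add_sub_cancel' (by omega)]
  · rintro (⟨i, hi, rfl⟩ | ⟨i, hi, rfl⟩)
    · exact ⟨i, by omega, rfl⟩
    · exact ⟨k + 1 + i, by omega, by push_cast; ring⟩

theorem card_arc (hk : k < N) : (arc a k).card = k + 1 := by
  rw [arc, Finset.card_image_of_injOn, Finset.card_range]
  intro i hi j hj hij
  simp only [Finset.coe_range, Set.mem_Iio] at hi hj
  rw [add_right_inj, natCast_eq_natCast_iff', Nat.mod_eq_of_lt (by omega),
    Nat.mod_eq_of_lt (by omega)] at hij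
  exact hij

theorem disjoint_arc_arc (h : k + 1 + l < N) :
    Disjoint (arc a k) (arc (a + ((k + 1 : ℕ) : ZMod N)) l) := by
  rw [← Finset.card_union_eq_card_add_card, ← arc_add, card_arc h, card_arc (by omega),
    card_arc (by omega)]
  omega

variable [NeZero N]

theorem arc_eq_univ : arc a (N - 1) = Finset.univ :=
  Finset.eq_univ_of_card _ <| by
    rw [card_arc (by have := NeZero.pos N; omega), card, Nat.sub_add_cancel (NeZero.pos N)]

theorem succ_lt_of_forall_arc_notMem {V : Set (ZMod N)} (hV : V.Nonempty)
    (h : ∀ x ∈ arc a k, x ∉ V) : k + 1 < N := by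
  by_contra hk
  obtain ⟨v, hv⟩ := hV
  have hsub : arc a (N - 1) ⊆ arc a k := arc_mono (by omega)
  exact h v (hsub (by rw [arc_eq_univ]; exact Finset.mem_univ v)) hv

end Arc

/-- `arc a k` is a whole cyclic-interval component of the complement of `V`. -/
def IsGap (V : Set (ZMod N)) (a : ZMod N) (k : ℕ) : Prop :=
  (∀ x ∈ arc a k, x ∉ V) ∧ a - 1 ∈ V ∧ a + ((k + 1 : ℕ) : ZMod N) ∈ V

section IsGap

variable {V S : Set (ZMod N)} {a b x : ZMod N} {k m : ℕ}

theorem IsGap.of_maximal (hV : ∀ x ∈ arc a k, x ∉ V) (hS : S ⊆ arc a k)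
    (hmax : ∀ b m, (∀ x ∈ arc b m, x ∉ V) → S ⊆ arc b m → m ≤ k) : IsGap V a k := by
  have hgrow : ∀ b y, arc b (k + 1) = insert y (arc a k) → y ∈ V := fun b y hb => by
    by_contra hy
    have := hmax b (k + 1) (by rw [hb, Finset.forall_mem_insert]; exact ⟨hy, hV⟩)
      (by rw [hb, Finset.coe_insert]; exact hS.trans (Set.subset_insert _ _))
    omega
  exact ⟨hV, hgrow _ _ arc_sub_one_succ, hgrow _ _ arc_succ⟩

theorem IsGap.add_one_mem_iff (hgap : IsGap V a k) (hx : x ∉ V) (hx1 : x + 1 ∉ V) :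
    x + 1 ∈ arc a k ↔ x ∈ arc a k := by
  simp only [mem_arc]
  constructor
  · rintro ⟨_ | i, hi, h⟩
    · exact (hx (eq_sub_of_add_eq (by simpa using h) ▸ hgap.2.1)).elim
    · exact ⟨i, by omega, by push_cast at h; linear_combination h⟩
  · rintro ⟨i, hi, rfl⟩
    rcases hi.lt_or_eq with hi | rfl
    · exact ⟨i + 1, hi, by push_cast; ring⟩
    · exact (hx1 (by simpa [add_assoc] using hgap.2.2)).elim

theorem IsGap.arc_subset (hgap : IsGap V a k) (hb : ∀ x ∈ arc b m, x ∉ V)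
    (hmeet : ¬Disjoint (arc a k) (arc b m)) : arc b m ⊆ arc a k := by
  obtain ⟨x, hxa, hxb⟩ := Finset.not_disjoint_iff.1 hmeet
  obtain ⟨i, hi, rfl⟩ := mem_arc.1 hxb
  have hbV : ∀ l ≤ m, b + (l : ZMod N) ∉ V := fun l hl => hb _ (mem_arc.2 ⟨l, hl, rfl⟩)
  have hall : ∀ l ≤ m, b + (l : ZMod N) ∈ arc a k := by
    refine Nat.forall_le_of_iff_succ (fun l hl => ?_) hi hxa
    have := hgap.add_one_mem_iff (hbV l hl.le) (by simpa [add_assoc] using hbV (l + 1) hl)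
    rw [Nat.cast_succ, ← add_assoc, this]
  intro y hy
  obtain ⟨l, hl, rfl⟩ := mem_arc.1 hy
  exact hall l hl

end IsGap

section NonCrossing

variable {N n : ℕ} {V : Fin n → Set (ZMod N)}

def HasSeparatingArc (V : Fin n → Set (ZMod N)) (k : ℕ) : Prop :=
  ∃ s t a, s ≠ t ∧ (∀ x ∈ arc a k, x ∉ V s) ∧ V t ⊆ arc a k

variable [NeZero N]

theorem exists_isGap_of_longest (hn : 2 ≤ n) (hne : ∀ i, (V i).Nonempty)
    (hnoncross : ∀ i j, i ≠ j → ∃ b m, (∀ x ∈ arc b m, x ∉ V i) ∧ V j ⊆ arc b m) :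
    ∃ s a K, IsGap (V s) a K ∧ ∀ m, HasSeparatingArc V m → m ≤ K := by
  classical
  have hbound : ∀ k, HasSeparatingArc V k → k ≤ N - 2 := by
    rintro k ⟨s, _, _, _, hs, _⟩
    have := succ_lt_of_forall_arc_notMem (hne s) hs
    omega
  have h01 : (⟨0, by omega⟩ : Fin n) ≠ ⟨1, by omega⟩ := by simp
  obtain ⟨a, k, hsep⟩ := hnoncross _ _ h01
  have hk : HasSeparatingArc V k := ⟨_, _, a, h01, hsep⟩
  set K := Nat.findGreatest (HasSeparatingArc V) (N - 2)
  have hlongest : ∀ m, HasSeparatingArc V m → m ≤ K := fun m hm =>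
    Nat.le_findGreatest (hbound m hm) hm
  obtain ⟨s, t, a, hst, hs, ht⟩ : HasSeparatingArc V K := Nat.findGreatest_spec (hbound k hk) hk
  exact ⟨s, a, K, .of_maximal hs ht fun b m hb htb => hlongest m ⟨s, t, b, hst, hb, htb⟩,
    hlongest⟩

theorem IsGap.subset_of_longest (hne : ∀ i, (V i).Nonempty)
    (hnoncross : ∀ i j, i ≠ j → ∃ b m, (∀ x ∈ arc b m, x ∉ V i) ∧ V j ⊆ arc b m)
    {s : Fin n} {a : ZMod N} {K : ℕ} (hgap : IsGap (V s) a K)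
    (hlongest : ∀ m, HasSeparatingArc V m → m ≤ K) {j : Fin n} (hj : j ≠ s) :
    V j ⊆ arc a K := by
  intro x hx
  by_contra hxa
  obtain ⟨b, m, hb, hjb⟩ := hnoncross s j hj.symm
  have hK : K + 1 < N := succ_lt_of_forall_arc_notMem (hne s) hgap.1
  have hm : m + 1 < N := succ_lt_of_forall_arc_notMem (hne s) hb
  have hdisj : Disjoint (arc a K) (arc b m) := by
    by_contra h
    exact hxa (hgap.arc_subset hb h (hjb hx))
  set C := arc (b + ((m + 1 : ℕ) : ZMod N)) (N - 2 - m)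
  have hcover : arc b m ∪ C = Finset.univ := by
    rw [← arc_add, show m + 1 + (N - 2 - m) = N - 1 by omega, arc_eq_univ]
  have hsC : V s ⊆ C := fun y hy =>
    (Finset.mem_union.1 (hcover ▸ Finset.mem_univ y)).resolve_left fun h => hb y h hy
  have hCj : ∀ y ∈ C, y ∉ V j := fun y hy hyj =>
    Finset.disjoint_left.1 (disjoint_arc_arc (by omega)) (hjb hyj) hy
  have hKm : N - 2 - m ≤ K := hlongest _ ⟨j, s, _, hj, hCj, hsC⟩
  obtain ⟨v, hv⟩ := hne s
  have hvnot : v ∉ arc a K ∪ arc b m := by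
    rw [Finset.mem_union, not_or]
    exact ⟨fun h => hgap.1 v h hv, fun h => hb v h hv⟩
  have := Finset.card_le_univ (insert v (arc a K ∪ arc b m))
  rw [Finset.card_insert_of_notMem hvnot, Finset.card_union_of_disjoint hdisj, card_arc hK.le,
    card_arc hm.le, ZMod.card] at this
  omega

end NonCrossing

end ZMod

open ZMod

theorem inOneComponent_iff {N : ℕ} {V S : Set (ZMod N)} :
    InOneComponent N V S ↔ ∃ a k, (∀ x ∈ arc a k, x ∉ V) ∧ S ⊆ arc a k := by
  simp only [InOneComponent, forall_mem_arc, coe_arc]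

theorem stmt13_general (N : ℕ) (hN : 2 ≤ N) (n : ℕ) (hn : 2 ≤ n)
    (V : Fin n → Set (ZMod N))
    (hne : ∀ i, (V i).Nonempty)
    (hnoncross : ∀ i j, i ≠ j → InOneComponent N (V i) (V j)) :
    ∃ s : Fin n, InOneComponent N (V s) (⋃ j ∈ {j : Fin n | j ≠ s}, V j) := by
  have : NeZero N := ⟨by omega⟩
  simp only [inOneComponent_iff] at hnoncross ⊢
  obtain ⟨s, a, K, hgap, hlongest⟩ := exists_isGap_of_longest hn hne hnoncross
  exact ⟨s, a, K, hgap.1, Set.iUnion₂_subset fun j hj =>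
    hgap.subset_of_longest hne hnoncross hlongest hj⟩

theorem stmt13 (N : ℕ) (hN : 2 ≤ N) (n : ℕ) (hn : 2 ≤ n)
    (V : Fin n → Set (ZMod N))
    (hne : ∀ i, (V i).Nonempty)
    (hdisj : ∀ i j, i ≠ j → Disjoint (V i) (V j))
    (hnoncross : ∀ i j, i ≠ j → InOneComponent N (V i) (V j)) :
    ∃ s : Fin n, InOneComponent N (V s) (⋃ j ∈ {j : Fin n | j ≠ s}, V j) :=
  stmt13_general N hN n hn V hne hnoncross
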